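/- Let 0 < q < 1 and d ∈ ℂ. For every nonzero polynomial p ∈ ℂ[x] there exists a unique polynomial P ∈ ℂ[x] with P(0) = 0 such that for all z ∈ ℂ∖{0}: P(η_d(z)) − P(η_d(z/q)) = (η_d(z) − η_d(z/q)) · p(η_{d/q}(z)); moreover deg P = deg p + 1. (Well-definedness of the 'primitive polynomial' map I_λ[p] = P for the q-Racah case.) -/

import Mathlib

/-!
Write `x = η_d(z)`, `y = η_d(z/q)` and `w = η_{d/q}(z)`. With `u = z⁻¹` and `v = dz`, all three are
affine in `u` and `v`, and `uv = d`; consequently `x + y = s(w)` and `xy = t(w)` for explicit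
polynomials `s`, `t` of degrees 1 and 2. Hence `x^k - y^k = (x - y) U_k(w)`, where `U_k` is the
Lucas sequence of `(s, t)`: a polynomial of degree `k - 1` with leading coefficient
`(1 - q^k)/(1 - q) ≠ 0`. The linear map `X^k ↦ U_k` therefore lowers degrees by exactly one and
is triangular, so it can be inverted on polynomials without constant term.

For uniqueness, the difference `Q` of two solutions satisfies `Q(η_d(q^(k+1))) = Q(η_d(q^k))` and
`Q(η_d(1)) = Q(0) = 0`, so `Q` vanishes on the unbounded, hence infinite, set `{η_d(q^k)}`.
-/

open Polynomial Filter Topology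

section Lucas

variable {R : Type*} [CommRing R]

def lucasU (s t : R) : ℕ → R
  | 0 => 0
  | 1 => 1
  | n + 2 => s * lucasU s t (n + 1) - t * lucasU s t n

theorem lucasU_mul_sub (x y : R) : ∀ n, lucasU (x + y) (x * y) n * (x - y) = x ^ n - y ^ n
  | 0 => by simp [lucasU]
  | 1 => by simp [lucasU]
  | n + 2 => by
    rw [lucasU]
    linear_combination (x + y) * lucasU_mul_sub x y (n + 1) - x * y * lucasU_mul_sub x y n

theorem map_lucasU {S : Type*} [CommRing S] (f : R →+* S) (s t : R) :
    ∀ n, f (lucasU s t n) = lucasU (f s) (f t) n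
  | 0 => by simp [lucasU]
  | 1 => by simp [lucasU]
  | n + 2 => by simp [lucasU, map_lucasU f s t (n + 1), map_lucasU f s t n]

variable {s t : R[X]}

theorem natDegree_lucasU_succ_le (hs : s.natDegree ≤ 1) (ht : t.natDegree ≤ 2) :
    ∀ n, (lucasU s t (n + 1)).natDegree ≤ n
  | 0 => by simp [lucasU]
  | 1 => by simpa [lucasU] using hs
  | n + 2 => by
    rw [lucasU]
    refine natDegree_sub_le_of_le (natDegree_mul_le_of_le hs
      (natDegree_lucasU_succ_le hs ht (n + 1))) (natDegree_mul_le_of_le ht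
      (natDegree_lucasU_succ_le hs ht n)) |>.trans ?_
    omega

theorem coeff_lucasU_succ (hs : s.natDegree ≤ 1) (ht : t.natDegree ≤ 2) :
    ∀ n, (lucasU s t (n + 1)).coeff n = lucasU (s.coeff 1) (t.coeff 2) (n + 1)
  | 0 => by simp [lucasU]
  | 1 => by simp [lucasU]
  | n + 2 => by
    have h₁ := coeff_mul_add_eq_of_natDegree_le hs (natDegree_lucasU_succ_le hs ht (n + 1))
    have h₂ := coeff_mul_add_eq_of_natDegree_le ht (natDegree_lucasU_succ_le hs ht n)
    rw [show 1 + (n + 1) = n + 2 by ring] at h₁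
    rw [show 2 + n = n + 2 by ring] at h₂
    rw [lucasU, coeff_sub, h₁, h₂, coeff_lucasU_succ hs ht (n + 1), coeff_lucasU_succ hs ht n]
    rfl

theorem degree_lucasU_succ (hs : s.natDegree ≤ 1) (ht : t.natDegree ≤ 2) (n : ℕ)
    (hn : lucasU (s.coeff 1) (t.coeff 2) (n + 1) ≠ 0) : (lucasU s t (n + 1)).degree = n :=
  degree_eq_of_le_of_coeff_ne_zero (degree_le_of_natDegree_le (natDegree_lucasU_succ_le hs ht n))
    (by rwa [coeff_lucasU_succ hs ht])

end Lucas

namespace Polynomial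

section
variable {R : Type*} [CommRing R]

noncomputable def linearOfMonomials (G : ℕ → R[X]) : R[X] →ₗ[R] R[X] :=
  lsum fun k => LinearMap.smulRight LinearMap.id (G k)

theorem linearOfMonomials_monomial (G : ℕ → R[X]) (k : ℕ) (a : R) :
    linearOfMonomials G (monomial k a) = C a * G k := by
  rw [linearOfMonomials, lsum_apply, sum_monomial_index _ _ (by simp)]
  simp [smul_eq_C_mul]

theorem eval_sub_eval_eq_mul_eval_linearOfMonomials_lucasU {s t : R[X]} {x y w : R}
    (hs : s.eval w = x + y) (ht : t.eval w = x * y) (P : R[X]) :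
    P.eval x - P.eval y = (x - y) * (linearOfMonomials (lucasU s t) P).eval w := by
  induction P using Polynomial.induction_on' with
  | add P Q hP hQ => simp only [eval_add, map_add]; linear_combination hP + hQ
  | monomial k a =>
    have hU : (lucasU s t k).eval w = lucasU (x + y) (x * y) k := by
      rw [← coe_evalRingHom, map_lucasU, coe_evalRingHom, hs, ht]
    rw [linearOfMonomials_monomial, eval_mul, eval_C, hU, eval_monomial, eval_monomial]
    linear_combination (-a) * lucasU_mul_sub x y k
end

variable {K : Type*} [Field K]

theorem exists_linearOfMonomials_eq {G : ℕ → K[X]} (hG : ∀ n : ℕ, (G (n + 1)).degree = n)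
    (p : K[X]) : ∃ P : K[X], P.coeff 0 = 0 ∧ P.degree = p.degree + 1 ∧
      linearOfMonomials G P = p := by
  suffices ∀ N : ℕ, ∀ p : K[X], p.degree < N → ∃ P : K[X], P.coeff 0 = 0 ∧
      P.degree = p.degree + 1 ∧ linearOfMonomials G P = p from
    this _ p (degree_le_natDegree.trans_lt (WithBot.coe_lt_coe.mpr p.natDegree.lt_add_one))
  intro N
  induction N with
  | zero =>
    intro p hp
    obtain rfl : p = 0 := by simpa using hp
    exact ⟨0, by simp⟩
  | succ N ih =>
    intro p hp
    rcases (Order.le_of_lt_succ hp : p.degree ≤ N).lt_or_eq with hlt | hN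
    · exact ih p hlt
    have hp0 : p ≠ 0 := by rintro rfl; simp at hN
    have hG0 : G (N + 1) ≠ 0 := by intro h; simpa [h] using hG N
    set a := p.leadingCoeff / (G (N + 1)).leadingCoeff
    have ha : a ≠ 0 := div_ne_zero (leadingCoeff_ne_zero.mpr hp0) (leadingCoeff_ne_zero.mpr hG0)
    have hdeg : (C a * G (N + 1)).degree = N := by rw [degree_C_mul ha, hG]
    have hsub : (p - C a * G (N + 1)).degree < N := by
      refine hN ▸ degree_sub_lt_left (hN.trans hdeg.symm) hp0 ?_
      rw [leadingCoeff_mul, leadingCoeff_C, div_mul_cancel₀ _ (leadingCoeff_ne_zero.mpr hG0)]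
    obtain ⟨P, hP0, hPdeg, hP⟩ := ih _ hsub
    have hmon : (monomial (N + 1) a).degree = N + 1 := by rw [degree_monomial _ ha]; norm_cast
    refine ⟨P + monomial (N + 1) a, by simp [hP0], ?_, ?_⟩
    · have hlt : P.degree < (monomial (N + 1) a).degree := by
        rw [hmon, hPdeg]
        exact WithBot.add_lt_add_right WithBot.one_ne_bot hsub
      rw [degree_add_eq_right_of_degree_lt hlt, hmon, hN]
    · rw [map_add, hP, linearOfMonomials_monomial, sub_add_cancel]
end Polynomial

section QRacah

variable {K : Type*} [Field K]

def qRacahEta (d z : K) : K := (z⁻¹ - 1) * (1 - d * z)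

noncomputable def qRacahSum (q d : K) : K[X] := C (1 + q) * X - C ((1 - q) * (1 - d / q))

noncomputable def qRacahProd (q d : K) : K[X] := C q * X ^ 2 - C ((1 - q) * (1 - d)) * X

variable {q : K} (d : K)

theorem eval_qRacahSum (hq : q ≠ 0) {z : K} (hz : z ≠ 0) :
    (qRacahSum q d).eval ((z⁻¹ - 1) * (1 - d * z / q)) = qRacahEta d z + qRacahEta d (z / q) := by
  simp only [qRacahSum, qRacahEta, eval_sub, eval_mul, eval_C, eval_X]
  field_simp
  ring

theorem eval_qRacahProd (hq : q ≠ 0) {z : K} (hz : z ≠ 0) :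
    (qRacahProd q d).eval ((z⁻¹ - 1) * (1 - d * z / q)) = qRacahEta d z * qRacahEta d (z / q) := by
  simp only [qRacahProd, qRacahEta, eval_sub, eval_mul, eval_C, eval_X, eval_pow]
  field_simp
  ring

end QRacah

section QRacahNormed

variable {𝕜 : Type*} [NormedField 𝕜] {q : 𝕜} (d : 𝕜)

theorem degree_lucasU_qRacah (hq : ‖q‖ < 1) (n : ℕ) :
    (lucasU (qRacahSum q d) (qRacahProd q d) (n + 1)).degree = n := by
  refine degree_lucasU_succ (by unfold qRacahSum; compute_degree!)
    (by unfold qRacahProd; compute_degree!) n ?_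
  have hs : (qRacahSum q d).coeff 1 = 1 + q := by
    simp only [qRacahSum, coeff_sub, coeff_C_mul_X, coeff_C]; simp
  have ht : (qRacahProd q d).coeff 2 = 1 * q := by
    simp only [qRacahProd, coeff_sub, coeff_C_mul_X, coeff_C_mul_X_pow]; simp
  intro h
  have hgeom := lucasU_mul_sub 1 q (n + 1)
  rw [← hs, ← ht, h, zero_mul, one_pow, eq_comm, sub_eq_zero] at hgeom
  have := pow_lt_one₀ (norm_nonneg q) hq n.succ_ne_zero
  rw [← norm_pow, ← hgeom, norm_one] at this
  exact this.false

theorem infinite_range_qRacahEta_pow (hq0 : q ≠ 0) (hq : ‖q‖ < 1) :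
    (Set.range fun k : ℕ => qRacahEta d (q ^ k)).Infinite := by
  intro hfin
  obtain ⟨M, hM⟩ := hfin.isBounded.exists_norm_le
  have hpow := tendsto_pow_atTop_nhds_zero_of_norm_lt_one hq
  have h0 : Tendsto (fun k => q ^ k * qRacahEta d (q ^ k)) atTop (𝓝 0) :=
    hpow.zero_mul_isBoundedUnder_le (isBoundedUnder_of ⟨M, fun k => hM _ ⟨k, rfl⟩⟩)
  have h1 : Tendsto (fun k => q ^ k * qRacahEta d (q ^ k)) atTop (𝓝 1) := by
    have hη : ∀ k : ℕ, q ^ k * qRacahEta d (q ^ k) = (1 - q ^ k) * (1 - d * q ^ k) := by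
      intro k
      have := pow_ne_zero k hq0
      simp only [qRacahEta]
      field_simp
    simp only [hη]
    have := ((tendsto_const_nhds (x := (1 : 𝕜))).sub hpow).mul
      ((tendsto_const_nhds (x := (1 : 𝕜))).sub (hpow.const_mul d))
    simpa using this
  exact one_ne_zero (tendsto_nhds_unique h1 h0)

theorem eq_zero_of_eval_qRacahEta_eq (hq0 : q ≠ 0) (hq : ‖q‖ < 1) {Q : 𝕜[X]} (h0 : Q.eval 0 = 0)
    (h : ∀ z ≠ 0, Q.eval (qRacahEta d z) = Q.eval (qRacahEta d (z / q))) : Q = 0 := by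
  have hroot (k : ℕ) : Q.IsRoot (qRacahEta d (q ^ k)) := by
    induction k with
    | zero => simpa [qRacahEta] using h0
    | succ k ih => rwa [IsRoot, h _ (pow_ne_zero _ hq0), pow_succ, mul_div_cancel_right₀ _ hq0]
  exact eq_zero_of_infinite_isRoot Q
    ((infinite_range_qRacahEta_pow d hq0 hq).mono (Set.range_subset_iff.mpr hroot))

end QRacahNormed

/-- Well-definedness of the 'primitive polynomial' map `I_λ[p] = P` (q-Racah case,
multiplicative variable `z = q^x`, `η_d(z) = (z⁻¹-1)(1-dz)`, `η_{d/q}(z) = (z⁻¹-1)(1-dz/q)`):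
for every nonzero `p` there is a unique polynomial `P` with `P(0) = 0` and
`P(η_d(z)) - P(η_d(z/q)) = (η_d(z) - η_d(z/q)) · p(η_{d/q}(z))` for all `z ≠ 0`;
moreover `deg P = deg p + 1`. -/
theorem qracah_primitive_polynomial (q : ℝ) (hq : 0 < q) (hq1 : q < 1)
    (d : ℂ) (p : Polynomial ℂ) (hp : p ≠ 0) :
    ∃ P : Polynomial ℂ,
      (P.eval 0 = 0 ∧
        ∀ z : ℂ, z ≠ 0 →
          P.eval ((z⁻¹ - 1) * (1 - d * z))
              - P.eval (((z / (q : ℂ))⁻¹ - 1) * (1 - d * (z / (q : ℂ))))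
            = (((z⁻¹ - 1) * (1 - d * z)) - (((z / (q : ℂ))⁻¹ - 1) * (1 - d * (z / (q : ℂ)))))
                * p.eval ((z⁻¹ - 1) * (1 - d * z / (q : ℂ))))
      ∧ P.natDegree = p.natDegree + 1
      ∧ ∀ P' : Polynomial ℂ,
          (P'.eval 0 = 0 ∧
            ∀ z : ℂ, z ≠ 0 →
              P'.eval ((z⁻¹ - 1) * (1 - d * z))
                  - P'.eval (((z / (q : ℂ))⁻¹ - 1) * (1 - d * (z / (q : ℂ))))
                = (((z⁻¹ - 1) * (1 - d * z)) - (((z / (q : ℂ))⁻¹ - 1) * (1 - d * (z / (q : ℂ)))))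
                    * p.eval ((z⁻¹ - 1) * (1 - d * z / (q : ℂ)))) → P' = P := by
  have hq0 : (q : ℂ) ≠ 0 := Complex.ofReal_ne_zero.mpr hq.ne'
  have hqn : ‖(q : ℂ)‖ < 1 := by rwa [Complex.norm_real, Real.norm_of_nonneg hq.le]
  obtain ⟨P, hP0, hPdeg, hP⟩ := exists_linearOfMonomials_eq (degree_lucasU_qRacah d hqn) p
  have hPsol : P.eval 0 = 0 ∧ ∀ z : ℂ, z ≠ 0 →
      P.eval (qRacahEta d z) - P.eval (qRacahEta d (z / q))
        = (qRacahEta d z - qRacahEta d (z / q)) * p.eval ((z⁻¹ - 1) * (1 - d * z / q)) := by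
    refine ⟨coeff_zero_eq_eval_zero P ▸ hP0, fun z hz => ?_⟩
    rw [← hP]
    exact eval_sub_eval_eq_mul_eval_linearOfMonomials_lucasU (eval_qRacahSum d hq0 hz)
      (eval_qRacahProd d hq0 hz) P
  refine ⟨P, hPsol, natDegree_eq_of_degree_eq_some ?_, fun P' hP' => ?_⟩
  · rw [hPdeg, degree_eq_natDegree hp]
    norm_cast
  · refine sub_eq_zero.mp (eq_zero_of_eval_qRacahEta_eq d hq0 hqn (by simp [hP'.1, hPsol.1]) ?_)
    intro z hz
    have hPz := hPsol.2 z hz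
    simp only [qRacahEta, eval_sub] at hPz ⊢
    linear_combination hP'.2 z hz - hPz
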